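/- The Legendre conjugate of the Sinkhorn negentropy has the closed variational form: for every f ∈ ℝ^d, max_{α ∈ △^d} (⟨α, f⟩ − Ω_C(α)) = −log min_{α ∈ △^d} Φ_C(α, f), where Φ_C(α,f) = Σ_{i,j=1}^d α_i α_j exp(−(f_i + f_j + c_{ij})/2). -/

import Mathlib

open Finset Real Filter

noncomputable section

/-- The probability simplex in `ℝ^d`. -/
def simplexS (d : ℕ) : Set (Fin d → ℝ) := stdSimplex ℝ (Fin d)

/-- Transport plans between `α` and `β`: nonnegative matrices with prescribed marginals,
supported where `α i * β j > 0`. -/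
def couplings {d : ℕ} (α β : Fin d → ℝ) : Set (Matrix (Fin d) (Fin d) ℝ) :=
  {p | (∀ i j, 0 ≤ p i j) ∧ (∀ i, ∑ j, p i j = α i) ∧ (∀ j, ∑ i, p i j = β j) ∧
    ∀ i j, α i * β j = 0 → p i j = 0}

/-- The entropy-regularized transport cost of a plan `p` (with the convention `0 log 0 = 0`,
which holds automatically since `Real.log 0 = 0`). -/
def OTcost {d : ℕ} (C : Matrix (Fin d) (Fin d) ℝ) (ε : ℝ) (α β : Fin d → ℝ)
    (p : Matrix (Fin d) (Fin d) ℝ) : ℝ :=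
  (∑ i, ∑ j, p i j * C i j) + ε * ∑ i, ∑ j, p i j * Real.log (p i j / (α i * β j))

/-- Entropy-regularized optimal transport cost `OT_{C,ε}(α,β)`. -/
def OT {d : ℕ} (C : Matrix (Fin d) (Fin d) ℝ) (ε : ℝ) (α β : Fin d → ℝ) : ℝ :=
  sInf (OTcost C ε α β '' couplings α β)

/-- The Sinkhorn negentropy `Ω_C(α) = -(1/2) OT_{C,2}(α,α)`. -/
def Omega {d : ℕ} (C : Matrix (Fin d) (Fin d) ℝ) (α : Fin d → ℝ) : ℝ :=
  -(1 / 2) * OT C 2 α α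

open scoped Classical

/-- `Φ_C(α,f) = Σ_{i,j} α_i α_j exp(-(f_i + f_j + c_{ij})/2)`. -/
def Phi {d : ℕ} (C : Matrix (Fin d) (Fin d) ℝ) (α f : Fin d → ℝ) : ℝ :=
  ∑ i, ∑ j, α i * α j * Real.exp (-(f i + f j + C i j) / 2)

/-- The geometric log-sum-exp `Ω_C^*(f) = -log min_{α ∈ △^d} Φ_C(α, f)`. -/
def OmegaStar {d : ℕ} (C : Matrix (Fin d) (Fin d) ℝ) (f : Fin d → ℝ) : ℝ :=
  -Real.log (sInf ((fun α => Phi C α f) '' simplexS d))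

/-- The geometric softmax: the (unique, when the kernel is positive definite) minimizer of
`Φ_C(·, f)` over the simplex. -/
def gsoftmax {d : ℕ} (C : Matrix (Fin d) (Fin d) ℝ) (f : Fin d → ℝ) : Fin d → ℝ :=
  if h : ∃ α ∈ simplexS d, IsMinOn (fun β => Phi C β f) (simplexS d) α
  then h.choose else fun _ => 0

/-- The soft C-transform `T(f,α)_i = -2 log Σ_j α_j exp((f_j - c_{ij})/2)`. -/
def Tsoft {d : ℕ} (C : Matrix (Fin d) (Fin d) ℝ) (f α : Fin d → ℝ) : Fin d → ℝ :=
  fun i => -2 * Real.log (∑ j, α j * Real.exp ((f j - C i j) / 2))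

/-- `f` is the symmetric Sinkhorn potential of `α`: `-f = T(-f, α)`. -/
def IsSinkhornPotential {d : ℕ} (C : Matrix (Fin d) (Fin d) ℝ) (α f : Fin d → ℝ) : Prop :=
  -f = Tsoft C (-f) α

/-- The symmetric Sinkhorn potential `∇Ω(α)`: the (unique, when the kernel is positive
definite) `f` with `-f = T(-f, α)`. -/
def gradOmega {d : ℕ} (C : Matrix (Fin d) (Fin d) ℝ) (α : Fin d → ℝ) : Fin d → ℝ :=
  if h : ∃ f : Fin d → ℝ, IsSinkhornPotential C α f then h.choose else fun _ => 0

/-- The extrapolation `f^E = -T(-(f - Ω_C^*(f)·1), g-softmax(f)) + Ω_C^*(f)·1`. -/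
def extrap {d : ℕ} (C : Matrix (Fin d) (Fin d) ℝ) (f : Fin d → ℝ) : Fin d → ℝ :=
  fun i => -(Tsoft C (fun j => -(f j - OmegaStar C f)) (gsoftmax C f) i) + OmegaStar C f

/-- The kernel matrix `K = (exp(-c_{ij}/2))_{ij}`. -/
def kernelK {d : ℕ} (C : Matrix (Fin d) (Fin d) ℝ) : Matrix (Fin d) (Fin d) ℝ :=
  Matrix.of fun i j => Real.exp (-(C i j) / 2)

/-!
For every plan `π` with marginals `(α, α)` and every potential `g`, the entropic cost is
`2 KL(π ‖ G_g) + 2 ⟨α, g⟩`, where `G_g = (α_i α_j e^{(g_i + g_j - c_ij)/2})` is the Gibbs plan.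
With `g = -f`, Gibbs' inequality `KL(π ‖ G) ≥ -log Σ G = -log Φ_C(α, f)` gives
`⟨α, f⟩ - Ω_C(α) ≥ -log Φ_C(α, f)` for every `α`.

Conversely, the symmetric Sinkhorn scaling `π = diag(x) K diag(x)` of `α`, with
`K = (e^{-c_ij/2})`, is itself the Gibbs plan of `g = -2 log (K x)`, so its cost is explicit.
Jensen's inequality and AM–GM then give `⟨α, f⟩ - Ω_C(α) ≤ -log Φ_C(β, f)` for
`β ∝ α e^f / (K x)²`. The scaling exists because `u ↦ ⟨α, u⟩ - ½ log Σ α_i α_j K_ij e^{u_i + u_j}`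
is coercive modulo the directions it ignores, and its critical points are exactly the scalings.
-/

open scoped Matrix

theorem sum_mul_log_div_le_log_sum {ι : Type*} [Fintype ι] {p w : ι → ℝ}
    (hp : ∀ i, 0 ≤ p i) (hp1 : ∑ i, p i = 1) (hw : ∀ i, 0 ≤ w i)
    (hpw : ∀ i, 0 < p i → 0 < w i) :
    ∑ i, p i * log (w i / p i) ≤ log (∑ i, w i) := by
  obtain ⟨i₀, hi₀⟩ : ∃ i, 0 < p i := by
    by_contra! h
    simp [le_antisymm (h _) (hp _)] at hp1
  have hW : 0 < ∑ i, w i :=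
    (hpw i₀ hi₀).trans_le (single_le_sum (fun i _ => hw i) (mem_univ i₀))
  -- termwise `log t ≤ t - 1` at `t = w i / (p i * W)`
  have hterm : ∀ i, p i * log (w i / p i) - p i * log (∑ i, w i) ≤ w i / ∑ i, w i - p i := by
    intro i
    rcases (hp i).eq_or_lt with h | h
    · simp [← h, div_nonneg (hw i) hW.le]
    have hwi := hpw i h
    calc p i * log (w i / p i) - p i * log (∑ i, w i)
        = p i * log (w i / (p i * ∑ i, w i)) := by
          rw [log_div hwi.ne' h.ne', log_div hwi.ne' (by positivity), log_mul h.ne' hW.ne']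
          ring
      _ ≤ p i * (w i / (p i * ∑ i, w i) - 1) :=
          mul_le_mul_of_nonneg_left (log_le_sub_one_of_pos (by positivity)) h.le
      _ = w i / ∑ i, w i - p i := by field_simp
  have hsum := sum_le_sum fun i (_ : i ∈ univ) => hterm i
  rw [sum_sub_distrib, sum_sub_distrib, ← sum_mul, ← sum_div, hp1, div_self hW.ne'] at hsum
  linarith

def gibbsPlan {d : ℕ} (C : Matrix (Fin d) (Fin d) ℝ) (ε : ℝ) (α β g h : Fin d → ℝ) :
    Matrix (Fin d) (Fin d) ℝ :=
  Matrix.of fun i j => α i * β j * exp ((g i + h j - C i j) / ε)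

section Couplings

variable {d : ℕ} {α β : Fin d → ℝ} {p : Matrix (Fin d) (Fin d) ℝ}

lemma left_nonneg_of_mem_couplings (hp : p ∈ couplings α β) (i : Fin d) : 0 ≤ α i :=
  hp.2.1 i ▸ sum_nonneg fun j _ => hp.1 i j

lemma right_nonneg_of_mem_couplings (hp : p ∈ couplings α β) (j : Fin d) : 0 ≤ β j :=
  hp.2.2.1 j ▸ sum_nonneg fun i _ => hp.1 i j

lemma mul_pos_of_mem_couplings (hp : p ∈ couplings α β) {i j : Fin d} (hij : 0 < p i j) :
    0 < α i * β j :=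
  (mul_nonneg (left_nonneg_of_mem_couplings hp i) (right_nonneg_of_mem_couplings hp j)).lt_of_ne
    fun h => hij.ne' (hp.2.2.2 i j h.symm)

lemma sum_sum_mul_add_of_mem_couplings (hp : p ∈ couplings α β) (g h : Fin d → ℝ) :
    ∑ i, ∑ j, p i j * (g i + h j) = ∑ i, α i * g i + ∑ j, β j * h j := by
  simp only [mul_add, sum_add_distrib, ← sum_mul, hp.2.1]
  rw [sum_comm]
  simp only [← sum_mul, hp.2.2.1]

lemma vecMulVec_mem_couplings (hα : α ∈ stdSimplex ℝ (Fin d))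
    (hβ : β ∈ stdSimplex ℝ (Fin d)) : Matrix.vecMulVec α β ∈ couplings α β :=
  ⟨fun i j => mul_nonneg (hα.1 i) (hβ.1 j),
    fun i => by simp [Matrix.vecMulVec_apply, ← mul_sum, hβ.2],
    fun j => by simp [Matrix.vecMulVec_apply, ← sum_mul, hα.2], fun _ _ h => h⟩

end Couplings

section EntropicOT

variable {d : ℕ} (C : Matrix (Fin d) (Fin d) ℝ) {ε : ℝ} {α β : Fin d → ℝ}

lemma OTcost_eq_klDiv_gibbsPlan_add (hε : ε ≠ 0) {p : Matrix (Fin d) (Fin d) ℝ}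
    (hp : p ∈ couplings α β) (g h : Fin d → ℝ) :
    OTcost C ε α β p = ε * ∑ i, ∑ j, p i j * log (p i j / gibbsPlan C ε α β g h i j)
      + ∑ i, α i * g i + ∑ j, β j * h j := by
  have hterm : ∀ i j, p i j * C i j + ε * (p i j * log (p i j / (α i * β j)))
      = ε * (p i j * log (p i j / gibbsPlan C ε α β g h i j)) + p i j * (g i + h j) := by
    intro i j
    rcases (hp.1 i j).eq_or_lt with h0 | h0
    · simp [← h0]
    have hαβ := mul_pos_of_mem_couplings hp h0
    rw [gibbsPlan, Matrix.of_apply, log_div h0.ne' hαβ.ne', log_div h0.ne' (by positivity),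
      log_mul hαβ.ne' (exp_pos _).ne', log_exp]
    field_simp
    ring
  rw [add_assoc, ← sum_sum_mul_add_of_mem_couplings hp g h, OTcost, mul_sum, mul_sum,
    ← sum_add_distrib, ← sum_add_distrib]
  refine sum_congr rfl fun i _ => ?_
  rw [mul_sum, mul_sum, ← sum_add_distrib, ← sum_add_distrib]
  exact sum_congr rfl fun j _ => hterm i j

lemma le_OTcost (hε : 0 < ε) (hα : ∑ i, α i = 1) {p : Matrix (Fin d) (Fin d) ℝ}
    (hp : p ∈ couplings α β) (g h : Fin d → ℝ) :
    ∑ i, α i * g i + ∑ j, β j * h j - ε * log (∑ i, ∑ j, gibbsPlan C ε α β g h i j)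
      ≤ OTcost C ε α β p := by
  have hW : ∀ q : Fin d × Fin d, 0 ≤ gibbsPlan C ε α β g h q.1 q.2 := fun q =>
    mul_nonneg (mul_nonneg (left_nonneg_of_mem_couplings hp _)
      (right_nonneg_of_mem_couplings hp _)) (exp_pos _).le
  have hgibbs := sum_mul_log_div_le_log_sum (p := fun q : Fin d × Fin d => p q.1 q.2)
    (fun q => hp.1 q.1 q.2) (by rw [Fintype.sum_prod_type]; simp [hp.2.1, hα]) hW
    fun q hq => mul_pos (mul_pos_of_mem_couplings hp hq) (exp_pos _)
  simp only [Fintype.sum_prod_type] at hgibbs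
  have hkl : ∑ i, ∑ j, p i j * log (p i j / gibbsPlan C ε α β g h i j)
      = -∑ i, ∑ j, p i j * log (gibbsPlan C ε α β g h i j / p i j) := by
    simp only [← sum_neg_distrib, ← mul_neg, ← log_inv, inv_div]
  rw [OTcost_eq_klDiv_gibbsPlan_add C hε.ne' hp g h, hkl]
  linarith [mul_le_mul_of_nonneg_left hgibbs hε.le]

lemma le_OT (hε : 0 < ε) (hα : α ∈ stdSimplex ℝ (Fin d)) (hβ : β ∈ stdSimplex ℝ (Fin d))
    (g h : Fin d → ℝ) :
    ∑ i, α i * g i + ∑ j, β j * h j - ε * log (∑ i, ∑ j, gibbsPlan C ε α β g h i j)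
      ≤ OT C ε α β :=
  le_csInf ((Set.nonempty_of_mem (vecMulVec_mem_couplings hα hβ)).image _)
    (Set.forall_mem_image.2 fun _ hp => le_OTcost C hε hα.2 hp g h)

lemma OT_le_of_gibbsPlan_mem (hε : 0 < ε) (hα : ∑ i, α i = 1) {g h : Fin d → ℝ}
    (hgh : gibbsPlan C ε α β g h ∈ couplings α β) :
    OT C ε α β ≤ ∑ i, α i * g i + ∑ j, β j * h j := by
  have hbdd : BddBelow (OTcost C ε α β '' couplings α β) :=
    ⟨_, Set.forall_mem_image.2 fun _ hp => le_OTcost C hε hα hp 0 0⟩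
  refine (csInf_le hbdd ⟨_, hgh, rfl⟩).trans_eq ?_
  rw [OTcost_eq_klDiv_gibbsPlan_add C hε.ne' hgh g h]
  simp

end EntropicOT

lemma exists_pos_of_mem_stdSimplex {ι : Type*} [Fintype ι] {α : ι → ℝ}
    (hα : α ∈ stdSimplex ℝ ι) : ∃ i, 0 < α i := by
  by_contra! h
  simpa [le_antisymm (h _) (hα.1 _)] using hα.2

section SymmetricScaling

variable {ι : Type*} [Fintype ι] (K : Matrix ι ι ℝ) (α : ι → ℝ)

def scalingEnergy (u : ι → ℝ) : ℝ := ∑ i, ∑ j, α i * α j * K i j * exp (u i + u j)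

def scalingObjective (u : ι → ℝ) : ℝ := ∑ i, α i * u i - log (scalingEnergy K α u) / 2

variable {K α}

lemma mul_self_mul_le_scalingEnergy (hK0 : ∀ i j, 0 ≤ K i j) (hα : ∀ i, 0 ≤ α i)
    (u : ι → ℝ) (k : ι) : α k * α k * K k k * exp (u k + u k) ≤ scalingEnergy K α u := by
  have hterm : ∀ i j, 0 ≤ α i * α j * K i j * exp (u i + u j) := fun i j =>
    mul_nonneg (mul_nonneg (mul_nonneg (hα i) (hα j)) (hK0 i j)) (exp_pos _).le
  exact (single_le_sum (fun j _ => hterm k j) (mem_univ k)).trans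
    (single_le_sum (fun i _ => sum_nonneg fun j _ => hterm i j) (mem_univ k))

lemma scalingEnergy_pos (hK0 : ∀ i j, 0 ≤ K i j) (hKdiag : ∀ i, 0 < K i i)
    (hα : α ∈ stdSimplex ℝ ι) (u : ι → ℝ) : 0 < scalingEnergy K α u := by
  obtain ⟨k, hk⟩ := exists_pos_of_mem_stdSimplex hα
  have := hKdiag k
  exact lt_of_lt_of_le (by positivity) (mul_self_mul_le_scalingEnergy hK0 hα.1 u k)

lemma continuous_scalingObjective (hK0 : ∀ i j, 0 ≤ K i j) (hKdiag : ∀ i, 0 < K i i)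
    (hα : α ∈ stdSimplex ℝ ι) : Continuous (scalingObjective K α) := by
  have hq : Continuous (scalingEnergy K α) := by unfold scalingEnergy; fun_prop
  unfold scalingObjective
  exact (continuous_finsetSum _ fun i _ => by fun_prop).sub
    ((hq.log fun u => (scalingEnergy_pos hK0 hKdiag hα u).ne').div_const 2)

lemma exists_normalized_scalingObjective_eq (hK0 : ∀ i j, 0 ≤ K i j)
    (hKdiag : ∀ i, 0 < K i i) (hα : α ∈ stdSimplex ℝ ι) (u : ι → ℝ) :
    ∃ v, (∀ i, α i = 0 → v i = 0) ∧ ∑ i, α i * v i = 0 ∧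
      scalingObjective K α v = scalingObjective K α u := by
  set c := ∑ i, α i * u i
  set v : ι → ℝ := fun i => if α i = 0 then 0 else u i - c
  have hv : ∀ i, α i * v i = α i * u i - α i * c := fun i => by
    by_cases h : α i = 0 <;> simp [v, h, mul_sub]
  have hsum : ∑ i, α i * v i = 0 := by simp [hv, sum_sub_distrib, ← sum_mul, hα.2, c]
  have henergy : scalingEnergy K α v = exp (-(2 * c)) * scalingEnergy K α u := by
    simp only [scalingEnergy, mul_sum]
    refine sum_congr rfl fun i _ => sum_congr rfl fun j _ => ?_
    by_cases hi : α i = 0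
    · simp [hi]
    by_cases hj : α j = 0
    · simp [hj]
    simp only [v, hi, hj, if_false]
    rw [show u i - c + (u j - c) = -(2 * c) + (u i + u j) by ring, exp_add]
    ring
  refine ⟨v, fun i hi => by simp [v, hi], hsum, ?_⟩
  rw [scalingObjective, scalingObjective, hsum, henergy,
    log_mul (exp_pos _).ne' (scalingEnergy_pos hK0 hKdiag hα u).ne', log_exp]
  ring

lemma le_log_div_of_scalingEnergy_le (hK0 : ∀ i j, 0 ≤ K i j) (hα : ∀ i, 0 ≤ α i)
    {v : ι → ℝ} {Q : ℝ} (hQ : scalingEnergy K α v ≤ Q) {i : ι} (hi : 0 < α i)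
    (hKi : 0 < K i i) : v i ≤ log (Q / (α i * α i * K i i)) / 2 := by
  have hdiag := (mul_self_mul_le_scalingEnergy hK0 hα v i).trans hQ
  have hexp : exp (v i + v i) ≤ Q / (α i * α i * K i i) := by
    rw [le_div_iff₀ (by positivity), mul_comm]
    exact hdiag
  have := (le_log_iff_exp_le ((exp_pos _).trans_le hexp)).2 hexp
  linarith

lemma isCompact_scalingObjective_superlevel (hK0 : ∀ i j, 0 ≤ K i j)
    (hKdiag : ∀ i, 0 < K i i) (hα : α ∈ stdSimplex ℝ ι) :
    IsCompact {v | (∀ i, α i = 0 → v i = 0) ∧ ∑ i, α i * v i = 0 ∧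
      scalingObjective K α 0 ≤ scalingObjective K α v} := by
  -- where `α i = 0`, the bounds below collapse to `0` through `x / 0 = 0` and `log 0 = 0`
  set upper : ι → ℝ := fun i => log (scalingEnergy K α 0 / (α i * α i * K i i)) / 2
  set H := ∑ i, α i * upper i
  have hclosed : IsClosed {v : ι → ℝ | (∀ i, α i = 0 → v i = 0) ∧ ∑ i, α i * v i = 0 ∧
      scalingObjective K α 0 ≤ scalingObjective K α v} := by
    simp only [Set.ofPred_and, Set.ofPred_forall]
    exact (isClosed_iInter fun i => isClosed_iInter fun _ =>
      isClosed_eq (continuous_apply i) continuous_const).inter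
      ((isClosed_eq (by fun_prop) continuous_const).inter
        (isClosed_le continuous_const (continuous_scalingObjective hK0 hKdiag hα)))
  refine (isCompact_univ_pi fun i => isCompact_Icc (a := upper i - H / α i) (b := upper i))
    |>.of_isClosed_subset hclosed ?_
  rintro v ⟨hsupp, hmean, hsup⟩
  have hQ : scalingEnergy K α v ≤ scalingEnergy K α 0 := by
    simp only [scalingObjective, hmean, Pi.zero_apply, mul_zero, sum_const_zero,
      zero_sub, neg_le_neg_iff] at hsup
    exact (log_le_log_iff (scalingEnergy_pos hK0 hKdiag hα v)
      (scalingEnergy_pos hK0 hKdiag hα 0)).1 (by linarith)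
  have hle : ∀ i, v i ≤ upper i := fun i => by
    rcases (hα.1 i).eq_or_lt with h | h
    · simp [upper, hsupp i h.symm, ← h]
    · exact le_log_div_of_scalingEnergy_le hK0 hα.1 hQ h (hKdiag i)
  intro i _
  refine ⟨?_, hle i⟩
  rcases (hα.1 i).eq_or_lt with h | h
  · simp [upper, hsupp i h.symm, ← h]
  -- the weighted excesses `α k (upper k - v k)` are nonnegative and sum to `H`
  have hexcess : α i * (upper i - v i) ≤ H := by
    have hH : H = ∑ k, α k * (upper k - v k) := by simp [H, mul_sub, sum_sub_distrib, hmean]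
    rw [hH]
    exact single_le_sum (fun k _ => mul_nonneg (hα.1 k) (sub_nonneg.2 (hle k))) (mem_univ i)
  rw [sub_le_iff_le_add, ← sub_le_iff_le_add', le_div_iff₀ h, mul_comm]
  exact hexcess

lemma exists_forall_scalingObjective_le (hK0 : ∀ i j, 0 ≤ K i j) (hKdiag : ∀ i, 0 < K i i)
    (hα : α ∈ stdSimplex ℝ ι) : ∃ u, ∀ v, scalingObjective K α v ≤ scalingObjective K α u := by
  obtain ⟨u, -, hu⟩ := (isCompact_scalingObjective_superlevel hK0 hKdiag hα).exists_isMaxOn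
    ⟨0, fun _ _ => rfl, by simp, le_rfl⟩ (continuous_scalingObjective hK0 hKdiag hα).continuousOn
  refine ⟨u, fun v => ?_⟩
  obtain ⟨w, hsupp, hmean, hw⟩ := exists_normalized_scalingObjective_eq hK0 hKdiag hα v
  rw [← hw]
  by_cases h : scalingObjective K α 0 ≤ scalingObjective K α w
  · exact hu ⟨hsupp, hmean, h⟩
  · exact (not_le.1 h).le.trans (hu ⟨fun _ _ => rfl, by simp, le_rfl⟩)

lemma hasDerivAt_scalingEnergy_add_smul (hK : K.IsSymm) (u e : ι → ℝ) :
    HasDerivAt (fun t : ℝ => scalingEnergy K α (u + t • e))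
      (2 * ∑ a, e a * ∑ b, α a * α b * K a b * exp (u a + u b)) 0 := by
  have hterm : ∀ a b, HasDerivAt
      (fun t : ℝ => α a * α b * K a b * exp ((u + t • e) a + (u + t • e) b))
      (α a * α b * K a b * (exp (u a + u b) * (e a + e b))) 0 := by
    intro a b
    have hline : ∀ c, HasDerivAt (fun t : ℝ => (u + t • e) c) (e c) 0 := fun c => by
      simpa using ((hasDerivAt_id (0 : ℝ)).mul_const (e c)).const_add (u c)
    simpa using ((hline a).add (hline b)).exp.const_mul (α a * α b * K a b)
  refine (HasDerivAt.fun_sum (u := univ) fun a _ =>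
    HasDerivAt.fun_sum (u := univ) fun b _ => hterm a b).congr_deriv ?_
  have hswap : ∑ a, ∑ b, α a * α b * K a b * (exp (u a + u b) * e b)
      = ∑ a, ∑ b, α a * α b * K a b * (exp (u a + u b) * e a) := by
    rw [sum_comm]
    refine sum_congr rfl fun a _ => sum_congr rfl fun b _ => ?_
    rw [← hK.apply b a, add_comm (u b)]
    ring
  simp only [mul_add, sum_add_distrib, hswap, ← two_mul, mul_sum]
  exact sum_congr rfl fun a _ => sum_congr rfl fun b _ => by ring

lemma mul_mulVec_eq_of_isMax (hK : K.IsSymm) {u : ι → ℝ} (hq : 0 < scalingEnergy K α u)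
    (hmax : ∀ v, scalingObjective K α v ≤ scalingObjective K α u) (i : ι) :
    α i * exp (u i) * (K *ᵥ fun j => α j * exp (u j)) i = α i * scalingEnergy K α u := by
  set e : ι → ℝ := Pi.single i 1
  have hline : HasDerivAt (fun t : ℝ => scalingObjective K α (u + t • e))
      (α i - (∑ b, α i * α b * K i b * exp (u i + u b)) / scalingEnergy K α u) 0 := by
    have hlin : HasDerivAt (fun t : ℝ => ∑ a, α a * (u + t • e) a) (∑ a, α a * e a) 0 :=
      HasDerivAt.fun_sum fun a _ => by
        simpa using (((hasDerivAt_id (0 : ℝ)).mul_const (e a)).const_add (u a)).const_mul (α a)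
    have hlog :=
      ((hasDerivAt_scalingEnergy_add_smul hK u e).log (by simpa using hq.ne')).div_const 2
    refine (hlin.sub hlog).congr_deriv ?_
    simp only [e, Pi.single_apply, mul_ite, mul_one, mul_zero, sum_ite_eq', mem_univ,
      ↓reduceIte, ite_mul, one_mul, zero_mul, zero_smul, add_zero, sub_right_inj]
    ring
  have hzero := (IsLocalMax.hasDerivAt_eq_zero
    (Filter.Eventually.of_forall fun t => by simpa using hmax (u + t • e)) hline)
  have hsum : ∑ b, α i * α b * K i b * exp (u i + u b)
      = α i * exp (u i) * (K *ᵥ fun j => α j * exp (u j)) i := by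
    simp only [Matrix.mulVec, dotProduct, mul_sum, exp_add]
    exact sum_congr rfl fun b _ => by ring
  rw [sub_eq_zero, eq_div_iff hq.ne'] at hzero
  exact hsum.symm.trans hzero.symm

theorem exists_mul_mulVec_eq (hK : K.IsSymm) (hK0 : ∀ i j, 0 ≤ K i j)
    (hKdiag : ∀ i, 0 < K i i) (hα : α ∈ stdSimplex ℝ ι) :
    ∃ x, 0 ≤ x ∧ ∀ i, x i * (K *ᵥ x) i = α i := by
  obtain ⟨u, hu⟩ := exists_forall_scalingObjective_le hK0 hKdiag hα
  have hq := scalingEnergy_pos hK0 hKdiag hα u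
  set s := √(scalingEnergy K α u)
  refine ⟨s⁻¹ • fun j => α j * exp (u j), fun j => ?_, fun i => ?_⟩
  · have := hα.1 j
    simp only [Pi.zero_apply, Pi.smul_apply, smul_eq_mul]
    positivity
  rw [Matrix.mulVec_smul, Pi.smul_apply, Pi.smul_apply, smul_eq_mul, smul_eq_mul,
    mul_mul_mul_comm, mul_mulVec_eq_of_isMax hK hq hu i, ← mul_inv, ← sq, sq_sqrt hq.le]
  field_simp

end SymmetricScaling

section Kernel

lemma sum_mul_mul_le_sum_mul_mulVec {ι : Type*} [Fintype ι] {K : Matrix ι ι ℝ}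
    (hK : K.IsSymm) (hK0 : ∀ i j, 0 ≤ K i j) {x : ι → ℝ} (hx : 0 ≤ x) (a : ι → ℝ) :
    ∑ i, ∑ j, K i j * (x i * a i) * (x j * a j) ≤ ∑ i, x i * (K *ᵥ x) i * a i ^ 2 := by
  have hswap : ∑ i, ∑ j, K i j * x i * x j * a j ^ 2 = ∑ i, ∑ j, K i j * x i * x j * a i ^ 2 := by
    rw [sum_comm]
    refine sum_congr rfl fun i _ => sum_congr rfl fun j _ => ?_
    rw [hK.apply i j]
    ring
  calc ∑ i, ∑ j, K i j * (x i * a i) * (x j * a j)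
      ≤ ∑ i, ∑ j, K i j * x i * x j * ((a i ^ 2 + a j ^ 2) / 2) :=
        sum_le_sum fun i _ => sum_le_sum fun j _ => by
          have := mul_nonneg (mul_nonneg (hK0 i j) (hx i)) (hx j)
          nlinarith [sq_nonneg (a i - a j)]
    _ = ∑ i, x i * (K *ᵥ x) i * a i ^ 2 := by
        simp only [mul_add, add_div, sum_add_distrib, mul_div_assoc', ← sum_div, hswap,
          Matrix.mulVec, dotProduct, mul_sum, sum_mul]
        rw [add_halves]
        exact sum_congr rfl fun i _ => sum_congr rfl fun j _ => by ring

variable {d : ℕ} {C : Matrix (Fin d) (Fin d) ℝ}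

lemma kernelK_pos (i j : Fin d) : 0 < kernelK C i j := exp_pos _

lemma kernelK_isSymm (hC : C.IsSymm) : (kernelK C).IsSymm :=
  Matrix.IsSymm.ext fun i j => by simp [kernelK, hC.apply i j]

lemma mulVec_kernelK_pos {x : Fin d → ℝ} (hx : 0 ≤ x) {j : Fin d} (hj : 0 < x j) (i : Fin d) :
    0 < (kernelK C *ᵥ x) i :=
  (mul_pos (kernelK_pos i j) hj).trans_le
    (single_le_sum (fun k _ => mul_nonneg (kernelK_pos i k).le (hx k)) (mem_univ j))

lemma Phi_eq_sum_kernelK (β f : Fin d → ℝ) :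
    Phi C β f = ∑ i, ∑ j, kernelK C i j * (β i * exp (-f i / 2)) * (β j * exp (-f j / 2)) := by
  refine sum_congr rfl fun i _ => sum_congr rfl fun j _ => ?_
  rw [kernelK, Matrix.of_apply, show -(f i + f j + C i j) / 2 = -C i j / 2 + -f i / 2 + -f j / 2
    by ring, exp_add, exp_add]
  ring

lemma Phi_smul (c : ℝ) (β f : Fin d → ℝ) : Phi C (c • β) f = c ^ 2 * Phi C β f := by
  simp only [Phi, Pi.smul_apply, smul_eq_mul, mul_sum]
  exact sum_congr rfl fun i _ => sum_congr rfl fun j _ => by ring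

end Kernel

section Conjugate

variable {d : ℕ} {C : Matrix (Fin d) (Fin d) ℝ} {α : Fin d → ℝ}

lemma Phi_pos (hα : α ∈ simplexS d) (f : Fin d → ℝ) : 0 < Phi C α f := by
  obtain ⟨j, hj⟩ := exists_pos_of_mem_stdSimplex hα
  have hterm : ∀ i k, 0 ≤ α i * α k * exp (-(f i + f k + C i k) / 2) := fun i k =>
    mul_nonneg (mul_nonneg (hα.1 i) (hα.1 k)) (exp_pos _).le
  exact (by positivity : 0 < α j * α j * exp (-(f j + f j + C j j) / 2)).trans_le
    ((single_le_sum (fun k _ => hterm j k) (mem_univ j)).trans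
      (single_le_sum (fun i _ => sum_nonneg fun k _ => hterm i k) (mem_univ j)))

lemma neg_log_Phi_le (hα : α ∈ simplexS d) (f : Fin d → ℝ) :
    -log (Phi C α f) ≤ ∑ i, α i * f i - Omega C α := by
  have hOT := le_OT C two_pos hα hα (-f) (-f)
  have hPhi : ∑ i, ∑ j, gibbsPlan C 2 α α (-f) (-f) i j = Phi C α f :=
    sum_congr rfl fun i _ => sum_congr rfl fun j _ => by
      simp only [gibbsPlan, Matrix.of_apply, Pi.neg_apply]
      ring_nf
  simp only [hPhi, Pi.neg_apply, mul_neg, sum_neg_distrib] at hOT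
  rw [Omega]
  linarith

lemma OT_le_of_mul_mulVec_eq (hC : C.IsSymm) (hα : α ∈ simplexS d) {x : Fin d → ℝ}
    (hx : ∀ i, x i * (kernelK C *ᵥ x) i = α i) (hk : ∀ i, 0 < (kernelK C *ᵥ x) i) :
    OT C 2 α α ≤ -4 * ∑ i, α i * log ((kernelK C *ᵥ x) i) := by
  set k := kernelK C *ᵥ x
  set g : Fin d → ℝ := fun i => -2 * log (k i)
  have hplan : ∀ i j, gibbsPlan C 2 α α g g i j = x i * kernelK C i j * x j := by
    intro i j
    have := hk i
    have := hk j
    rw [gibbsPlan, Matrix.of_apply, kernelK, Matrix.of_apply, ← hx i, ← hx j,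
      show (g i + g j - C i j) / 2 = -C i j / 2 - log (k i) - log (k j) by simp only [g]; ring,
      exp_sub, exp_sub, exp_log (hk i), exp_log (hk j)]
    field_simp
  have hrow : ∀ i, ∑ j, gibbsPlan C 2 α α g g i j = α i := fun i => by
    simp only [hplan, mul_assoc, ← mul_sum, ← hx i]
    rfl
  have hmem : gibbsPlan C 2 α α g g ∈ couplings α α := by
    refine ⟨fun i j => ?_, hrow, fun j => ?_, fun i j h => by simp [gibbsPlan, h]⟩
    · exact mul_nonneg (mul_nonneg (hα.1 i) (hα.1 j)) (exp_pos _).le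
    · rw [← hrow j]
      refine sum_congr rfl fun i _ => ?_
      rw [hplan, hplan, (kernelK_isSymm hC).apply i j]
      ring
  refine (OT_le_of_gibbsPlan_mem C two_pos hα.2 hmem).trans_eq ?_
  simp only [g, mul_sum, ← sum_add_distrib]
  exact sum_congr rfl fun i _ => by ring

lemma sub_Omega_le_log_sum_of_mul_mulVec_eq (hC : C.IsSymm) (hα : α ∈ simplexS d)
    {x : Fin d → ℝ} (hx : ∀ i, x i * (kernelK C *ᵥ x) i = α i)
    (hk : ∀ i, 0 < (kernelK C *ᵥ x) i) (f : Fin d → ℝ) :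
    ∑ i, α i * f i - Omega C α ≤ log (∑ i, α i * exp (f i) / (kernelK C *ᵥ x) i ^ 2) := by
  set k := kernelK C *ᵥ x
  have hterm : ∀ i, α i * log (α i * exp (f i) / k i ^ 2 / α i)
      = α i * f i - 2 * (α i * log (k i)) := fun i => by
    rcases (hα.1 i).eq_or_lt with h | h
    · simp [← h]
    have := hk i
    rw [show α i * exp (f i) / k i ^ 2 / α i = exp (f i) / k i ^ 2 by field_simp,
      log_div (exp_pos _).ne' (by positivity), log_exp, log_pow]
    push_cast
    ring
  refine le_trans ?_ (sum_mul_log_div_le_log_sum hα.1 hα.2 (fun i => by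
    have := hα.1 i; positivity) fun i hi => by have := hk i; positivity)
  simp only [hterm, sum_sub_distrib, ← mul_sum, Omega]
  linarith [OT_le_of_mul_mulVec_eq hC hα hx hk]

lemma Phi_le_sum_of_mul_mulVec_eq (hC : C.IsSymm) {x : Fin d → ℝ} (hx0 : 0 ≤ x)
    (hx : ∀ i, x i * (kernelK C *ᵥ x) i = α i) (hk : ∀ i, 0 < (kernelK C *ᵥ x) i)
    (f : Fin d → ℝ) :
    Phi C (fun i => α i * exp (f i) / (kernelK C *ᵥ x) i ^ 2) f
      ≤ ∑ i, α i * exp (f i) / (kernelK C *ᵥ x) i ^ 2 := by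
  set k := kernelK C *ᵥ x
  have hxa : ∀ i, α i * exp (f i) / k i ^ 2 * exp (-f i / 2) = x i * (exp (f i / 2) / k i) :=
    fun i => by
      have := hk i
      have he : exp (f i) * exp (-f i / 2) = exp (f i / 2) := by rw [← exp_add]; ring_nf
      rw [← hx i, ← he]
      field_simp
  rw [Phi_eq_sum_kernelK]
  simp only [hxa]
  refine (sum_mul_mul_le_sum_mul_mulVec (kernelK_isSymm hC) (fun i j => (kernelK_pos i j).le)
    hx0 _).trans_eq (sum_congr rfl fun i _ => ?_)
  have := hk i
  have he : exp (f i / 2) ^ 2 = exp (f i) := by rw [sq, ← exp_add, add_halves]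
  rw [← hx i, div_pow, he]
  field_simp
  rfl

lemma exists_le_neg_log_Phi (hC : C.IsSymm) (hα : α ∈ simplexS d) (f : Fin d → ℝ) :
    ∃ β ∈ simplexS d, ∑ i, α i * f i - Omega C α ≤ -log (Phi C β f) := by
  obtain ⟨x, hx0, hx⟩ := exists_mul_mulVec_eq (kernelK_isSymm hC)
    (fun i j => (kernelK_pos i j).le) (fun i => kernelK_pos i i) hα
  obtain ⟨j, hj⟩ := exists_pos_of_mem_stdSimplex hα
  have hk : ∀ i, 0 < (kernelK C *ᵥ x) i := mulVec_kernelK_pos hx0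
    ((hx0 j).lt_of_ne fun h => by simp [← hx j, ← h] at hj)
  set w : Fin d → ℝ := fun i => α i * exp (f i) / (kernelK C *ᵥ x) i ^ 2
  have hw : ∀ i, 0 ≤ w i := fun i => by have := hα.1 i; positivity
  have hT : 0 < ∑ i, w i := (by have := hk j; positivity : 0 < w j).trans_le
    (single_le_sum (fun i _ => hw i) (mem_univ j))
  have hβ : (∑ i, w i)⁻¹ • w ∈ simplexS d :=
    ⟨fun i => by have := hw i; simp only [Pi.smul_apply, smul_eq_mul]; positivity,
      by simp [← mul_sum, hT.ne']⟩
  have hPhi : Phi C ((∑ i, w i)⁻¹ • w) f ≤ (∑ i, w i)⁻¹ := by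
    rw [Phi_smul, inv_pow, sq, mul_inv, mul_assoc]
    exact (mul_le_mul_of_nonneg_left ((inv_mul_le_one₀ hT).2
      (Phi_le_sum_of_mul_mulVec_eq hC hx0 hx hk f)) (inv_nonneg.2 hT.le)).trans_eq (mul_one _)
  refine ⟨_, hβ, (sub_Omega_le_log_sum_of_mul_mulVec_eq hC hα hx hk f).trans ?_⟩
  rw [le_neg, ← log_inv]
  exact log_le_log (Phi_pos hβ f) hPhi

end Conjugate

theorem conjugate_sinkhorn_negentropy_general (d : ℕ)
    (C : Matrix (Fin d) (Fin d) ℝ) (hCsym : C.IsSymm)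
    (f : Fin d → ℝ) :
    sSup ((fun α => (∑ i, α i * f i) - Omega C α) '' simplexS d)
      = -Real.log (sInf ((fun α => Phi C α f) '' simplexS d)) := by
  rcases (simplexS d).eq_empty_or_nonempty with hS | hS
  · -- `d = 0`: both sides vanish since `sSup ∅ = sInf ∅ = log 0 = 0`
    simp [hS]
  obtain ⟨β, hβ, hmin⟩ := (isCompact_stdSimplex ℝ (Fin d)).exists_isMinOn hS
    (by unfold Phi; fun_prop : Continuous fun α => Phi C α f).continuousOn
  have hupper : ∀ α ∈ simplexS d, ∑ i, α i * f i - Omega C α ≤ -log (Phi C β f) :=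
    fun α hα => by
      obtain ⟨γ, hγ, hle⟩ := exists_le_neg_log_Phi hCsym hα f
      exact hle.trans (neg_le_neg (log_le_log (Phi_pos hβ f) (hmin hγ)))
  have hinf : IsLeast ((fun α => Phi C α f) '' simplexS d) (Phi C β f) :=
    ⟨⟨β, hβ, rfl⟩, Set.forall_mem_image.2 fun _ hγ => hmin hγ⟩
  rw [hinf.csInf_eq]
  exact IsGreatest.csSup_eq ⟨⟨β, hβ, (hupper β hβ).antisymm (neg_log_Phi_le hβ f)⟩,
    Set.forall_mem_image.2 hupper⟩

/-- The Legendre conjugate of the Sinkhorn negentropy: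
`max_{α ∈ △^d} (⟨α,f⟩ - Ω_C(α)) = -log min_{α ∈ △^d} Φ_C(α,f)`. -/
theorem conjugate_sinkhorn_negentropy (d : ℕ) (hd : 1 ≤ d)
    (C : Matrix (Fin d) (Fin d) ℝ) (hCsym : C.IsSymm) (hCdiag : ∀ i, C i i = 0)
    (f : Fin d → ℝ) :
    sSup ((fun α => (∑ i, α i * f i) - Omega C α) '' simplexS d)
      = -Real.log (sInf ((fun α => Phi C α f) '' simplexS d)) :=
  conjugate_sinkhorn_negentropy_general d C hCsym f
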